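/- For every d ≥ 1 and every integer k with 0 ≤ k ≤ d - 1, the number of partitions of d² + k with fixed point d is the convolution f(d² + k, d) = ∑_{i=0}^{k} p(i) p(k-i). -/

import Mathlib

/-- The `d`-th largest part of a partition (1-indexed); `0` if the index is out of range. -/
def nthPart {n : ℕ} (p : n.Partition) (d : ℕ) : ℕ :=
  (p.parts.sort (· ≥ ·)).getD (d - 1) 0

/-- `f n d` is the number of partitions of `n` with fixed point `d`,
i.e. whose `d`-th largest part equals `d`. -/
noncomputable def f (n d : ℕ) : ℕ :=
  Nat.card {p : n.Partition // nthPart p d = d}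
/-- `p n` is the number of partitions of `n` (with `p 0 = 1`). -/
noncomputable def numPartitions (n : ℕ) : ℕ := Nat.card (Nat.Partition n)

/-!
Since `λ_{d+1} ≤ λ_d = d`, a partition with fixed point `d` has a `d × d` Durfee square, and
its Young diagram is that square together with a partition `α` glued to its right (with fewer
than `d` rows, because row `d` ends at the square) and a partition `β` glued below it (with
parts at most `d`). Conversely any such pair glues to a partition with fixed point `d`. When
the total size `|α| + |β| = k` is less than `d`, both side conditions are automatic, so the
partitions of `d² + k` with fixed point `d` are in bijection with pairs of partitions of `i`
and `k - i`.
-/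

open Multiset

theorem List.getD_eq_iff_countP_of_pairwise_ge {α : Type*} [LinearOrder α] {l : List α}
    (hl : l.Pairwise (· ≥ ·)) {d x₀ : α} (hx₀ : x₀ ≠ d) (i : ℕ) :
    l.getD i x₀ = d ↔ l.countP (d < ·) ≤ i ∧ i < l.countP (d ≤ ·) := by
  induction l generalizing i with
  | nil => simpa using hx₀
  | cons a t ih =>
    obtain ⟨ha, ht⟩ := List.pairwise_cons.1 hl
    have ih := ih ht
    rcases lt_trichotomy a d with had | rfl | had
    · have h1 : t.countP (d ≤ ·) = 0 := countP_eq_zero.2 fun x hx => by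
        simpa using (ha x hx).trans_lt had
      cases i <;> simp [-getD_eq_getElem?_getD, getD_cons_zero, getD_cons_succ, ih, h1,
        had.ne, had.not_ge, had.not_gt]
    · have h2 : t.countP (a < ·) = 0 := countP_eq_zero.2 fun x hx => by
        simpa using ha x hx
      cases i <;> simp [-getD_eq_getElem?_getD, getD_cons_zero, getD_cons_succ, ih, h2]
    · cases i <;> simp [-getD_eq_getElem?_getD, getD_cons_zero, getD_cons_succ, ih, had, had.le,
        had.ne']

theorem nthPart_eq_self_iff {n d : ℕ} (hd : 0 < d) (p : n.Partition) :
    nthPart p d = d ↔ p.parts.countP (d < ·) < d ∧ d ≤ p.parts.countP (d ≤ ·) := by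
  rw [nthPart, List.getD_eq_iff_countP_of_pairwise_ge (p.parts.pairwise_sort _) hd.ne,
    ← coe_countP, ← coe_countP, Multiset.sort_eq]
  exact and_congr (Nat.le_sub_one_iff_lt hd) ((Nat.sub_lt_iff_lt_add hd).trans Nat.lt_add_one_iff)

theorem Nat.Partition.card_parts_le {n : ℕ} (p : n.Partition) : card p.parts ≤ n := by
  simpa [p.parts_sum] using card_nsmul_le_sum fun x hx => p.parts_pos (i := x) hx

theorem Nat.Partition.mul_countP_le_le_self {n : ℕ} (p : n.Partition) (d : ℕ) :
    d * p.parts.countP (d ≤ ·) ≤ n := by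
  calc d * p.parts.countP (d ≤ ·)
      = card (p.parts.filter (d ≤ ·)) • d := by
        rw [countP_eq_card_filter, smul_eq_mul, mul_comm]
    _ ≤ (p.parts.filter (d ≤ ·)).sum := card_nsmul_le_sum fun x hx => (mem_filter.1 hx).2
    _ ≤ (p.parts.filter (d ≤ ·)).sum + (p.parts.filter (¬d ≤ ·)).sum :=
        Nat.le_add_right _ _
    _ = n := by rw [sum_filter_add_sum_filter_not, p.parts_sum]

theorem Multiset.countP_le_eq_countP_lt_add_count {α : Type*} [LinearOrder α] (s : Multiset α)
    (d : α) : s.countP (d ≤ ·) = s.countP (d < ·) + s.count d := by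
  induction s using Multiset.induction_on with
  | empty => simp
  | cons a s ih =>
    rcases lt_trichotomy a d with had | rfl | had
    · simp [ih, had.not_ge, had.not_gt, had.ne']
    · simp [ih, add_assoc]
    · simp [ih, had, had.le, had.ne]
      omega

theorem Multiset.filter_lt_add_filter_eq_add_filter_gt {α : Type*} [LinearOrder α]
    (s : Multiset α) (d : α) : s.filter (d < ·) + s.filter (· = d) + s.filter (· < d) = s := by
  ext x
  simp only [count_add, count_filter]
  split_ifs <;> grind

/-- The parts of the partition obtained by placing the rows `a` to the right of a `d × d` square
and the rows `b` below it. -/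
def durfeeParts (d : ℕ) (a b : Multiset ℕ) : Multiset ℕ :=
  a.map (· + d) + replicate (d - card a) d + b

section durfeeParts

variable {d : ℕ} {a b : Multiset ℕ}

theorem pos_of_mem_durfeeParts (ha : ∀ x ∈ a, 0 < x) (hb : ∀ x ∈ b, 0 < x) {x : ℕ}
    (hx : x ∈ durfeeParts d a b) : 0 < x := by
  simp only [durfeeParts, mem_add, mem_map, mem_replicate] at hx
  rcases hx with (⟨y, hy, rfl⟩ | ⟨hd, rfl⟩) | hx
  · exact Nat.add_pos_left (ha y hy) d
  · omega
  · exact hb x hx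

theorem filter_lt_durfeeParts (ha : ∀ x ∈ a, 0 < x) (hb : ∀ x ∈ b, x < d) :
    (durfeeParts d a b).filter (d < ·) = a.map (· + d) := by
  rw [durfeeParts, filter_add, filter_add, filter_eq_self.2, filter_eq_nil.2, filter_eq_nil.2,
    add_zero, add_zero]
  · exact fun x hx => (hb x hx).not_gt
  · intro x hx
    rw [eq_of_mem_replicate hx]
    exact lt_irrefl d
  · simpa using ha

theorem filter_gt_durfeeParts (hb : ∀ x ∈ b, x < d) :
    (durfeeParts d a b).filter (· < d) = b := by
  rw [durfeeParts, filter_add, filter_add, filter_eq_self.2 hb, filter_eq_nil.2, filter_eq_nil.2,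
    zero_add, zero_add]
  · intro x hx
    rw [eq_of_mem_replicate hx]
    exact lt_irrefl d
  · simp

theorem countP_le_durfeeParts (hb : ∀ x ∈ b, x < d) (ha : card a ≤ d) :
    (durfeeParts d a b).countP (d ≤ ·) = d := by
  have hmap : (a.map (· + d)).countP (d ≤ ·) = card a := by
    rw [countP_eq_card.2 (by simp), card_map]
  have hrep : (replicate (d - card a) d).countP (d ≤ ·) = d - card a := by
    rw [countP_eq_card.2 fun x hx => (eq_of_mem_replicate hx).ge, card_replicate]
  have hb' : b.countP (d ≤ ·) = 0 := countP_eq_zero.2 fun x hx => (hb x hx).not_ge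
  rw [durfeeParts, countP_add, countP_add, hmap, hrep, hb']
  omega

theorem sum_durfeeParts (ha : card a ≤ d) :
    (durfeeParts d a b).sum = d ^ 2 + (a.sum + b.sum) := by
  obtain ⟨c, rfl⟩ := Nat.exists_eq_add_of_le ha
  simp only [durfeeParts, sum_add, sum_map_add, map_id', map_const', sum_replicate, smul_eq_mul,
    Nat.add_sub_cancel_left]
  ring

theorem durfeeParts_filter_lt_filter_gt {s : Multiset ℕ} (hs : s.countP (d ≤ ·) = d) :
    durfeeParts d ((s.filter (d < ·)).map (· - d)) (s.filter (· < d)) = s := by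
  have hmap : ((s.filter (d < ·)).map (· - d)).map (· + d) = s.filter (d < ·) := by
    rw [map_map]
    conv_rhs => rw [← map_id (s.filter (d < ·))]
    exact map_congr rfl fun x hx => Nat.sub_add_cancel (mem_filter.1 hx).2.le
  have hcount : d - s.countP (d < ·) = s.count d := by
    have := countP_le_eq_countP_lt_add_count s d
    omega
  rw [durfeeParts, hmap, card_map, ← countP_eq_card_filter, hcount, ← filter_eq',
    filter_lt_add_filter_eq_add_filter_gt]

end durfeeParts

namespace Nat.Partition

def durfee (d : ℕ) {i j n : ℕ} (α : i.Partition) (β : j.Partition) (hi : i ≤ d)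
    (hn : d ^ 2 + (i + j) = n) : n.Partition where
  parts := durfeeParts d α.parts β.parts
  parts_pos := pos_of_mem_durfeeParts (fun _ => α.parts_pos) (fun _ => β.parts_pos)
  parts_sum := by
    rw [sum_durfeeParts (α.card_parts_le.trans hi), α.parts_sum, β.parts_sum, hn]

variable {d i j n : ℕ} (α : i.Partition) (β : j.Partition)

theorem nthPart_durfee (hi : i < d) (hj : j < d) (hn : d ^ 2 + (i + j) = n) :
    nthPart (durfee d α β hi.le hn) d = d := by
  have hb : ∀ x ∈ β.parts, x < d := fun _ hx => (le_of_mem_parts hx).trans_lt hj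
  rw [nthPart_eq_self_iff (by omega), countP_eq_card_filter]
  refine ⟨?_, (countP_le_durfeeParts hb (α.card_parts_le.trans hi.le)).ge⟩
  rw [durfee, filter_lt_durfeeParts (fun _ => α.parts_pos) hb, card_map]
  exact α.card_parts_le.trans_lt hi

end Nat.Partition

section durfeeMap

open Finset Nat.Partition

variable {d k : ℕ}

def durfeeMap (hk : k < d) (x : Σ ij : antidiagonal k, ij.1.1.Partition × ij.1.2.Partition) :
    {p : (d ^ 2 + k).Partition // nthPart p d = d} :=
  have hij := mem_antidiagonal.1 x.1.2
  ⟨durfee d x.2.1 x.2.2 (by omega) (by rw [hij]),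
    nthPart_durfee x.2.1 x.2.2 (by omega) (by omega) (by rw [hij])⟩

theorem durfeeMap_injective (hk : k < d) : Function.Injective (durfeeMap hk) := by
  rintro ⟨⟨⟨i, j⟩, hij⟩, α, β⟩ ⟨⟨⟨i', j'⟩, hij'⟩, α', β'⟩ h
  have hj : j < d := by have := mem_antidiagonal.1 hij; omega
  have hj' : j' < d := by have := mem_antidiagonal.1 hij'; omega
  have hparts : durfeeParts d α.parts β.parts = durfeeParts d α'.parts β'.parts :=
    congrArg (fun p => p.1.parts) h
  have hb : ∀ x ∈ β.parts, x < d := fun _ hx => (le_of_mem_parts hx).trans_lt hj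
  have hb' : ∀ x ∈ β'.parts, x < d := fun _ hx => (le_of_mem_parts hx).trans_lt hj'
  have hα : α.parts = α'.parts := by
    apply map_injective (add_left_injective d)
    rw [← filter_lt_durfeeParts (fun _ => α.parts_pos) hb, hparts,
      filter_lt_durfeeParts (fun _ => α'.parts_pos) hb']
  have hβ : β.parts = β'.parts := by
    rw [← filter_gt_durfeeParts (a := α.parts) hb, hparts, filter_gt_durfeeParts hb']
  obtain rfl : i = i' := α.parts_sum.symm.trans (hα ▸ α'.parts_sum)
  obtain rfl : j = j' := β.parts_sum.symm.trans (hβ ▸ β'.parts_sum)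
  rw [Nat.Partition.ext hα, Nat.Partition.ext hβ]

theorem durfeeMap_surjective (hk : k < d) : Function.Surjective (durfeeMap hk) := by
  rintro ⟨p, hp⟩
  rw [nthPart_eq_self_iff (by omega)] at hp
  -- `d + 1` parts of size at least `d` would already exceed `d² + k`.
  have hs : p.parts.countP (d ≤ ·) = d := by
    have := p.mul_countP_le_le_self d
    nlinarith
  set a := (p.parts.filter (d < ·)).map (· - d)
  set b := p.parts.filter (· < d)
  have hp_eq : durfeeParts d a b = p.parts := durfeeParts_filter_lt_filter_gt hs
  have hcard : card a ≤ d := by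
    rw [Multiset.card_map, ← countP_eq_card_filter]
    exact hp.1.le
  have hsum : a.sum + b.sum = k := by
    have := sum_durfeeParts (b := b) hcard
    rw [hp_eq, p.parts_sum] at this
    omega
  let α : a.sum.Partition := ⟨a, fun hx => by
    obtain ⟨y, hy, rfl⟩ := mem_map.1 hx
    exact Nat.sub_pos_of_lt (mem_filter.1 hy).2, rfl⟩
  let β : b.sum.Partition := ⟨b, fun hx => p.parts_pos (mem_filter.1 hx).1, rfl⟩
  exact ⟨⟨⟨(a.sum, b.sum), mem_antidiagonal.2 hsum⟩, α, β⟩,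
    Subtype.ext (Nat.Partition.ext hp_eq)⟩

end durfeeMap

/-- For `d ≥ 1` and `0 ≤ k ≤ d - 1`, `f(d² + k, d) = ∑_{i=0}^{k} p(i) p(k-i)`. -/
theorem f_convolution (d k : ℕ) (hd : 1 ≤ d) (hk : k ≤ d - 1) :
    f (d ^ 2 + k) d = ∑ i ∈ Finset.range (k + 1), numPartitions i * numPartitions (k - i) := by
  have hkd : k < d := by omega
  rw [f, ← Nat.card_eq_of_bijective _ ⟨durfeeMap_injective hkd, durfeeMap_surjective hkd⟩,
    Nat.card_sigma,
    Finset.sum_coe_sort _ fun ij : ℕ × ℕ => Nat.card (ij.1.Partition × ij.2.Partition),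
    Finset.Nat.sum_antidiagonal_eq_sum_range_succ fun i j => Nat.card (i.Partition × j.Partition)]
  simp only [Nat.card_prod, numPartitions]
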